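/- arXiv:math/0307102 — 2 statements merged into one kernel-verified Lean document; each statement's English description precedes it below -/
import Mathlib

section
/- Let M be an even lattice and let L = M ⊕ U be the orthogonal direct sum of M with a hyperbolic plane U = ℤ² carrying the form B((m,n),(m',n')) = mn' + m'n. Then L represents all possible norms: for every λ₀ ∈ L* and every rational number r with r − (λ₀,λ₀) ∈ 2ℤ there exists λ ∈ L* with λ − λ₀ ∈ L and (λ,λ) = r. -/
/-- The rational bilinear form on `ℚᵏ` associated to an integral Gram matrix `G`. -/
noncomputable def latBF {k : ℕ} (G : Matrix (Fin k) (Fin k) ℤ) (x y : Fin k → ℚ) : ℚ :=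
  dotProduct x ((G.map (Int.cast : ℤ → ℚ)).mulVec y)

/-- The bilinear form on `(M ⊕ U) ⊗ ℚ`, where `M` has Gram matrix `G` and `U` is the
hyperbolic plane `[[0,1],[1,0]]`. -/
noncomputable def hypBF {k : ℕ} (G : Matrix (Fin k) (Fin k) ℤ)
    (x y : (Fin k → ℚ) × ℚ × ℚ) : ℚ :=
  latBF G x.1 y.1 + x.2.1 * y.2.2 + x.2.2 * y.2.1

/-- The lattice `L = M ⊕ U` inside `L ⊗ ℚ`. -/
def hypL (k : ℕ) : Set ((Fin k → ℚ) × ℚ × ℚ) :=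
  {v | (∃ a : Fin k → ℤ, v.1 = fun i => (a i : ℚ)) ∧
       (∃ b : ℤ, v.2.1 = (b : ℚ)) ∧ (∃ c : ℤ, v.2.2 = (c : ℚ))}

/-- The dual lattice of `M ⊕ U`. -/
def hypDual {k : ℕ} (G : Matrix (Fin k) (Fin k) ℤ) : Set ((Fin k → ℚ) × ℚ × ℚ) :=
  {x | ∀ y ∈ hypL k, ∃ t : ℤ, hypBF G x y = t}

/-- A lattice of the form `L = M ⊕ U` (with `U` a hyperbolic plane) represents all
possible norms: for every `λ₀ ∈ L*` and every rational `r` with `r − (λ₀,λ₀) ∈ 2ℤ`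
there is `λ ∈ L*` with `λ − λ₀ ∈ L` and `(λ,λ) = r`. -/
theorem stmt9 {k : ℕ} (G : Matrix (Fin k) (Fin k) ℤ) (hsym : G.IsSymm) (hdet : G.det ≠ 0)
    (heven : ∀ a : Fin k → ℤ, ∃ t : ℤ, latBF G (fun i => (a i : ℚ)) (fun i => (a i : ℚ)) = 2 * t)
    (lam0 : (Fin k → ℚ) × ℚ × ℚ) (hlam0 : lam0 ∈ hypDual G)
    (r : ℚ) (hr : ∃ t : ℤ, r - hypBF G lam0 lam0 = 2 * t) :
    ∃ lam ∈ hypDual G, lam - lam0 ∈ hypL k ∧ hypBF G lam lam = r := by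

  obtain ⟨t, ht⟩ := hr
  obtain ⟨v, p, q⟩ := lam0
  have h01 : ((0 : Fin k → ℚ), (0:ℚ), (1:ℚ)) ∈ hypL k := ⟨⟨0, by simp; rfl⟩, ⟨0, by simp⟩, ⟨1, by simp⟩⟩
  have h10 : ((0 : Fin k → ℚ), (1:ℚ), (0:ℚ)) ∈ hypL k := ⟨⟨0, by simp; rfl⟩, ⟨1, by simp⟩, ⟨0, by simp⟩⟩
  obtain ⟨P, hP⟩ := hlam0 _ h01
  obtain ⟨Q, hQ⟩ := hlam0 _ h10
  have hp : p = (P : ℚ) := by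
    simpa [hypBF, latBF, Matrix.mulVec_zero] using hP
  have hq : q = (Q : ℚ) := by
    simpa [hypBF, latBF, Matrix.mulVec_zero] using hQ
  set b : ℤ := 1 - P with hb
  set c : ℤ := t - Q * (1 - P) with hc
  refine ⟨(v, p + (b : ℚ), q + (c : ℚ)), ?_, ?_, ?_⟩
  · intro y hy
    obtain ⟨s, hs⟩ := hlam0 y hy
    obtain ⟨⟨a, ha⟩, ⟨b', hb'⟩, ⟨c', hc'⟩⟩ := hy
    refine ⟨s + b * c' + c * b', ?_⟩
    simp only [hypBF] at hs ⊢
    rw [hb', hc'] at hs ⊢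
    push_cast
    linarith [hs]
  · refine ⟨⟨0, ?_⟩, ⟨b, ?_⟩, ⟨c, ?_⟩⟩ <;> simp <;> rfl
  · simp only [hypBF] at ht ⊢
    rw [hp, hq] at ht ⊢
    rw [hb, hc]
    push_cast at ht ⊢
    ring_nf
    ring_nf at ht
    linarith [ht]
end

section
/- Let N be a positive integer, equip ℝ³ with the quadratic form q(x,m,n) = 2N·x² + 2mn, and for τ ∈ ℍ let W(τ) ⊆ ℝ³ be the ℝ-linear span of the real and imaginary parts of w(τ) = (τ/√N, 1, −τ²) ∈ ℂ³. Define S(x,m,n) = (x, n, m) and T(x,m,n) = (x+m, m, n − 2N·x − N·m). Then S and T are linear isometries of (ℝ³, q) mapping the lattice ℤ³ onto itself, and for every τ ∈ ℍ one has S(W(τ)) = W(−1/τ) and T(W(τ)) = W(τ + √N). (Thus the generators τ ↦ −1/τ and τ ↦ τ + 2cos(π/k)·(for N = 1,2,3) of the arithmetic Hecke triangle groups come from automorphisms of the lattice ℤ(2N) ⊕ U.) -/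
/-- The quadratic form `q(x, m, n) = 2N·x² + 2mn` on `ℝ³`. -/
noncomputable def qform (N : ℕ) (v : ℝ × ℝ × ℝ) : ℝ :=
  2 * N * v.1 ^ 2 + 2 * v.2.1 * v.2.2

/-- The real span `W(τ)` of the real and imaginary parts of `w(τ) = (τ/√N, 1, −τ²)`. -/
noncomputable def Wspan (N : ℕ) (τ : ℂ) : Submodule ℝ (ℝ × ℝ × ℝ) :=
  Submodule.span ℝ
    {((τ / (Real.sqrt N : ℂ)).re, (1 : ℂ).re, (-τ ^ 2).re),
     ((τ / (Real.sqrt N : ℂ)).im, (1 : ℂ).im, (-τ ^ 2).im)}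

/-- `S(x, m, n) = (x, n, m)`. -/
def Smap (v : ℝ × ℝ × ℝ) : ℝ × ℝ × ℝ := (v.1, v.2.2, v.2.1)

/-- `T(x, m, n) = (x + m, m, n − 2N·x − N·m)`. -/
noncomputable def Tmap (N : ℕ) (v : ℝ × ℝ × ℝ) : ℝ × ℝ × ℝ :=
  (v.1 + v.2.1, v.2.1, v.2.2 - 2 * N * v.1 - N * v.2.1)

/-- The integral lattice `ℤ³ ⊆ ℝ³`. -/
def intLat : Set (ℝ × ℝ × ℝ) :=
  {v | ∃ a b c : ℤ, v = ((a : ℝ), (b : ℝ), (c : ℝ))}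

lemma span_pair_rot {u v : ℝ × ℝ × ℝ} (c : ℂ) (hc : c ≠ 0) :
    Submodule.span ℝ ({c.re • u - c.im • v, c.im • u + c.re • v} : Set (ℝ × ℝ × ℝ)) =
      Submodule.span ℝ {u, v} := by
  have hd : c.re ^ 2 + c.im ^ 2 ≠ 0 := by
    intro h
    apply hc
    have h1 : c.re = 0 := by nlinarith [sq_nonneg c.re, sq_nonneg c.im]
    have h2 : c.im = 0 := by nlinarith [sq_nonneg c.re, sq_nonneg c.im]
    exact Complex.ext h1 h2
  apply le_antisymm
  · rw [Submodule.span_le]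
    rintro x hx
    simp only [Set.mem_insert_iff, Set.mem_singleton_iff] at hx
    have hu : u ∈ Submodule.span ℝ ({u, v} : Set (ℝ × ℝ × ℝ)) := Submodule.subset_span (by simp)
    have hv : v ∈ Submodule.span ℝ ({u, v} : Set (ℝ × ℝ × ℝ)) := Submodule.subset_span (by simp)
    rcases hx with rfl | rfl
    · exact Submodule.sub_mem _ (Submodule.smul_mem _ _ hu) (Submodule.smul_mem _ _ hv)
    · exact Submodule.add_mem _ (Submodule.smul_mem _ _ hu) (Submodule.smul_mem _ _ hv)
  · rw [Submodule.span_le]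
    set a := c.re • u - c.im • v with ha'
    set b := c.im • u + c.re • v with hb'
    have ha : a ∈ Submodule.span ℝ ({a, b} : Set (ℝ × ℝ × ℝ)) := Submodule.subset_span (by simp)
    have hb : b ∈ Submodule.span ℝ ({a, b} : Set (ℝ × ℝ × ℝ)) := Submodule.subset_span (by simp)
    rintro x hx
    simp only [Set.mem_insert_iff, Set.mem_singleton_iff] at hx
    rcases hx with rfl | rfl
    · have key : x = (c.re / (c.re ^ 2 + c.im ^ 2)) • a + (c.im / (c.re ^ 2 + c.im ^ 2)) • b := by
        rw [ha', hb']
        match_scalars <;> field_simp <;> ring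
      rw [key]
      exact Submodule.add_mem _ (Submodule.smul_mem _ _ ha) (Submodule.smul_mem _ _ hb)
    · have key : x = (-(c.im / (c.re ^ 2 + c.im ^ 2))) • a + (c.re / (c.re ^ 2 + c.im ^ 2)) • b := by
        rw [ha', hb']
        match_scalars <;> field_simp <;> ring
      rw [key]
      exact Submodule.add_mem _ (Submodule.smul_mem _ _ ha) (Submodule.smul_mem _ _ hb)

lemma triple_re_combo (c z1 z2 z3 w1 w2 w3 : ℂ) (h1 : c * w1 = z1) (h2 : c * w2 = z2)
    (h3 : c * w3 = z3) :
    ((z1.re, z2.re, z3.re) : ℝ × ℝ × ℝ)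
      = c.re • ((w1.re, w2.re, w3.re) : ℝ × ℝ × ℝ) - c.im • (w1.im, w2.im, w3.im) := by
  subst h1 h2 h3
  simp [Prod.ext_iff, Complex.mul_re, Complex.mul_im, Prod.smul_mk, Prod.mk_sub_mk, smul_eq_mul]

lemma triple_im_combo (c z1 z2 z3 w1 w2 w3 : ℂ) (h1 : c * w1 = z1) (h2 : c * w2 = z2)
    (h3 : c * w3 = z3) :
    ((z1.im, z2.im, z3.im) : ℝ × ℝ × ℝ)
      = c.im • ((w1.re, w2.re, w3.re) : ℝ × ℝ × ℝ) + c.re • (w1.im, w2.im, w3.im) := by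
  subst h1 h2 h3
  simp [Prod.ext_iff, Complex.mul_re, Complex.mul_im, Prod.smul_mk, Prod.mk_add_mk, smul_eq_mul]
  constructor <;> ring_nf <;> simp [mul_comm]

/-- `S` and `T` are linear isometries of `(ℝ³, q)` mapping `ℤ³` onto itself, and in the
Grassmannian model they induce `τ ↦ −1/τ` and `τ ↦ τ + √N` on the upper half plane:
`S(W(τ)) = W(−1/τ)` and `T(W(τ)) = W(τ + √N)`. -/
theorem stmt18 (N : ℕ) (hN : 0 < N) :
    (IsLinearMap ℝ Smap ∧ (∀ v, qform N (Smap v) = qform N v) ∧ Smap '' intLat = intLat) ∧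
    (IsLinearMap ℝ (Tmap N) ∧ (∀ v, qform N (Tmap N v) = qform N v) ∧
      Tmap N '' intLat = intLat) ∧
    ∀ τ : ℂ, 0 < τ.im →
      Smap '' (Wspan N τ : Set (ℝ × ℝ × ℝ)) = (Wspan N (-1 / τ) : Set (ℝ × ℝ × ℝ)) ∧
      Tmap N '' (Wspan N τ : Set (ℝ × ℝ × ℝ)) =
        (Wspan N (τ + (Real.sqrt N : ℂ)) : Set (ℝ × ℝ × ℝ)) := by
  have hS : IsLinearMap ℝ Smap := by
    constructor
    · intro x y; simp [Smap, Prod.ext_iff]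
    · intro c x; simp [Smap, Prod.ext_iff]
  have hT : IsLinearMap ℝ (Tmap N) := by
    constructor
    · intro x y; simp [Tmap, Prod.ext_iff]; constructor <;> ring
    · intro c x; simp [Tmap, Prod.ext_iff]; constructor <;> ring
  have hs0 : Real.sqrt N ≠ 0 := by
    positivity
  have hss : Real.sqrt N * Real.sqrt N = N := Real.mul_self_sqrt (Nat.cast_nonneg N)
  -- image of a span under a linear map
  have himg : ∀ (g : ℝ × ℝ × ℝ → ℝ × ℝ × ℝ) (hg : IsLinearMap ℝ g) (s : Set (ℝ × ℝ × ℝ)),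
      g '' ↑(Submodule.span ℝ s) = ↑(Submodule.span ℝ (g '' s)) := by
    intro g hg s
    have : g = ⇑(hg.mk' g) := rfl
    rw [this, ← Submodule.map_span, Submodule.map_coe]
  refine ⟨⟨hS, ?_, ?_⟩, ⟨hT, ?_, ?_⟩, ?_⟩
  · intro v; simp only [qform, Smap]; ring
  · ext w
    simp only [Set.mem_image, intLat, Set.mem_setOf_eq]
    constructor
    · rintro ⟨u, ⟨a, b, c, rfl⟩, rfl⟩
      exact ⟨a, c, b, rfl⟩
    · rintro ⟨a, b, c, rfl⟩
      exact ⟨((a : ℝ), (c : ℝ), (b : ℝ)), ⟨a, c, b, rfl⟩, rfl⟩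
  · intro v; simp only [qform, Tmap]; ring
  · ext w
    simp only [Set.mem_image, intLat, Set.mem_setOf_eq]
    constructor
    · rintro ⟨u, ⟨a, b, c, rfl⟩, rfl⟩
      refine ⟨a + b, b, c - 2 * N * a - N * b, ?_⟩
      simp only [Tmap, Prod.mk.injEq]
      push_cast
      exact ⟨by ring, trivial, by ring⟩
    · rintro ⟨a, b, c, rfl⟩
      refine ⟨(((a - b : ℤ) : ℝ), ((b : ℤ) : ℝ), ((c + 2 * N * a - N * b : ℤ) : ℝ)),
        ⟨a - b, b, c + 2 * N * a - N * b, rfl⟩, ?_⟩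
      simp only [Tmap, Prod.mk.injEq]
      push_cast
      exact ⟨by ring, trivial, by ring⟩
  · intro τ him
    have hτ : τ ≠ 0 := by
      intro h; rw [h] at him; simp at him
    constructor
    · -- S part
      set c : ℂ := -τ ^ 2 with hcdef
      have hc : c ≠ 0 := by
        rw [hcdef]; exact neg_ne_zero.mpr (pow_ne_zero 2 hτ)
      have hA : c * ((-1 / τ) / ((Real.sqrt N : ℝ) : ℂ)) = τ / ((Real.sqrt N : ℝ) : ℂ) := by
        rw [hcdef]
        have : ((Real.sqrt N : ℝ) : ℂ) ≠ 0 := by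
          exact_mod_cast Complex.ofReal_ne_zero.mpr hs0
        field_simp
      have hB : c * 1 = -τ ^ 2 := by rw [hcdef, mul_one]
      have hC : c * (-(-1 / τ) ^ 2) = 1 := by
        rw [hcdef]; field_simp
      have e1 : Smap ((τ / ((Real.sqrt N : ℝ) : ℂ)).re, (1 : ℂ).re, (-τ ^ 2).re)
          = c.re • (((-1 / τ) / ((Real.sqrt N : ℝ) : ℂ)).re, (1 : ℂ).re, (-(-1 / τ) ^ 2).re)
            - c.im • (((-1 / τ) / ((Real.sqrt N : ℝ) : ℂ)).im, (1 : ℂ).im, (-(-1 / τ) ^ 2).im) :=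
        triple_re_combo c _ _ _ _ _ _ hA hB hC
      have e2 : Smap ((τ / ((Real.sqrt N : ℝ) : ℂ)).im, (1 : ℂ).im, (-τ ^ 2).im)
          = c.im • (((-1 / τ) / ((Real.sqrt N : ℝ) : ℂ)).re, (1 : ℂ).re, (-(-1 / τ) ^ 2).re)
            + c.re • (((-1 / τ) / ((Real.sqrt N : ℝ) : ℂ)).im, (1 : ℂ).im, (-(-1 / τ) ^ 2).im) :=
        triple_im_combo c _ _ _ _ _ _ hA hB hC
      unfold Wspan
      rw [himg Smap hS, Set.image_pair, e1, e2]
      exact congrArg _ (span_pair_rot c hc)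
    · -- T part
      have d1 : ((τ + ((Real.sqrt N : ℝ) : ℂ)) / ((Real.sqrt N : ℝ) : ℂ)).re
          = (τ / ((Real.sqrt N : ℝ) : ℂ)).re + 1 := by
        rw [Complex.div_ofReal_re, Complex.div_ofReal_re, Complex.add_re, Complex.ofReal_re]
        field_simp
      have d2 : ((τ + ((Real.sqrt N : ℝ) : ℂ)) / ((Real.sqrt N : ℝ) : ℂ)).im
          = (τ / ((Real.sqrt N : ℝ) : ℂ)).im := by
        rw [Complex.div_ofReal_im, Complex.div_ofReal_im, Complex.add_im, Complex.ofReal_im,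
          add_zero]
      have d3 : (-(τ + ((Real.sqrt N : ℝ) : ℂ)) ^ 2).re
          = (-τ ^ 2).re - 2 * N * (τ / ((Real.sqrt N : ℝ) : ℂ)).re - N := by
        have expand : -(τ + ((Real.sqrt N : ℝ) : ℂ)) ^ 2
            = -τ ^ 2 - 2 * ((Real.sqrt N : ℝ) : ℂ) * τ - ((Real.sqrt N : ℝ) : ℂ) ^ 2 := by ring
        rw [expand]
        simp only [Complex.sub_re, Complex.mul_re, Complex.ofReal_re, Complex.ofReal_im,
          Complex.div_ofReal_re, Complex.mul_im, pow_two, Complex.neg_re]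
        field_simp
        simp only [Complex.re_ofNat, Complex.im_ofNat]
        linear_combination (-Real.sqrt N - 2 * τ.re) * hss
      have d4 : (-(τ + ((Real.sqrt N : ℝ) : ℂ)) ^ 2).im
          = (-τ ^ 2).im - 2 * N * (τ / ((Real.sqrt N : ℝ) : ℂ)).im := by
        have expand : -(τ + ((Real.sqrt N : ℝ) : ℂ)) ^ 2
            = -τ ^ 2 - 2 * ((Real.sqrt N : ℝ) : ℂ) * τ - ((Real.sqrt N : ℝ) : ℂ) ^ 2 := by ring
        rw [expand]
        simp only [Complex.sub_im, Complex.mul_im, Complex.ofReal_re, Complex.ofReal_im,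
          Complex.div_ofReal_im, Complex.mul_re, pow_two, Complex.neg_im]
        field_simp
        simp only [Complex.re_ofNat, Complex.im_ofNat]
        linear_combination (-2 * τ.im) * hss
      have e3 : Tmap N ((τ / ((Real.sqrt N : ℝ) : ℂ)).re, (1 : ℂ).re, (-τ ^ 2).re)
          = (((τ + ((Real.sqrt N : ℝ) : ℂ)) / ((Real.sqrt N : ℝ) : ℂ)).re, (1 : ℂ).re,
            (-(τ + ((Real.sqrt N : ℝ) : ℂ)) ^ 2).re) := by
        simp only [Tmap, Complex.one_re, d1, d3, mul_one]
      have e4 : Tmap N ((τ / ((Real.sqrt N : ℝ) : ℂ)).im, (1 : ℂ).im, (-τ ^ 2).im)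
          = (((τ + ((Real.sqrt N : ℝ) : ℂ)) / ((Real.sqrt N : ℝ) : ℂ)).im, (1 : ℂ).im,
            (-(τ + ((Real.sqrt N : ℝ) : ℂ)) ^ 2).im) := by
        simp only [Tmap, Complex.one_im, d2, d4, mul_zero, add_zero, sub_zero]
      unfold Wspan
      rw [himg (Tmap N) hT, Set.image_pair, e3, e4]
end
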